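/- Let π be a permutation of a finite set Φ, let 𝒞 be a collection of subsets of Φ and G ⊆ Φ satisfy: (1) every E ∈ 𝒞 is π-invariant; (2) 𝒞 is closed under union and set difference; (3) G is nonempty and π-invariant; (4) every π-invariant subset of G belongs to 𝒞. Then the sum over nonempty E ∈ 𝒞 of (-1)^{|E|+1} sgn(π|_E) equals 1. -/

import Mathlib

open Finset
open scoped symmDiff

/-- The sign of the restriction of `π` to an invariant finite set `E`. -/
noncomputable def restrictedSign {Φ : Type*} [Fintype Φ] [DecidableEq Φ]
    (π : Equiv.Perm Φ) (E : Finset Φ) : ℤ :=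
  if h : ∀ x, x ∈ E ↔ π x ∈ E then
    (Equiv.Perm.sign (π.subtypePerm (fun x => (h x).symm) : Equiv.Perm {x // x ∈ E}) : ℤ)
  else 0

section Aux

variable {Φ : Type*} [Fintype Φ] [DecidableEq Φ] (π : Equiv.Perm Φ)

lemma rs_eq_ofSubtype (E : Finset Φ) (h : ∀ x, x ∈ E ↔ π x ∈ E) :
    restrictedSign π E =
      (Equiv.Perm.sign (Equiv.Perm.ofSubtype (π.subtypePerm (fun x => (h x).symm))) : ℤ) := by
  rw [restrictedSign, dif_pos h, Equiv.Perm.sign_ofSubtype]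

lemma ofSubtype_union {A B : Finset Φ} (hA : ∀ x, x ∈ A ↔ π x ∈ A)
    (hB : ∀ x, x ∈ B ↔ π x ∈ B) (hd : Disjoint A B) :
    Equiv.Perm.ofSubtype (π.subtypePerm
      (fun x => ((show ∀ x, x ∈ A ∪ B ↔ π x ∈ A ∪ B by
        intro x; simp only [mem_union, hA x, hB x]) x).symm)) =
    Equiv.Perm.ofSubtype (π.subtypePerm (fun x => (hA x).symm)) *
    Equiv.Perm.ofSubtype (π.subtypePerm (fun x => (hB x).symm)) := by
  ext x
  by_cases hxA : x ∈ A
  · have hxU : x ∈ A ∪ B := mem_union_left _ hxA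
    have hxB : x ∉ B := fun hxB => (Finset.disjoint_left.mp hd hxA) hxB
    rw [Equiv.Perm.ofSubtype_apply_of_mem (p := (· ∈ A ∪ B)) _ hxU]
    simp only [Equiv.Perm.mul_apply]
    rw [Equiv.Perm.ofSubtype_apply_of_not_mem (p := (· ∈ B)) _ hxB,
      Equiv.Perm.ofSubtype_apply_of_mem (p := (· ∈ A)) _ hxA]
    rfl
  · by_cases hxB : x ∈ B
    · have hxU : x ∈ A ∪ B := mem_union_right _ hxB
      have hπB : π x ∈ B := (hB x).mp hxB
      have hπA : π x ∉ A := fun hπA => (Finset.disjoint_left.mp hd hπA) hπB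
      rw [Equiv.Perm.ofSubtype_apply_of_mem (p := (· ∈ A ∪ B)) _ hxU]
      simp only [Equiv.Perm.mul_apply]
      rw [Equiv.Perm.ofSubtype_apply_of_mem (p := (· ∈ B)) _ hxB]
      simp only [Equiv.Perm.subtypePerm_apply]
      rw [Equiv.Perm.ofSubtype_apply_of_not_mem (p := (· ∈ A)) _ hπA]
    · have hxU : x ∉ A ∪ B := by simp [hxA, hxB]
      rw [Equiv.Perm.ofSubtype_apply_of_not_mem (p := (· ∈ A ∪ B)) _ hxU]
      simp only [Equiv.Perm.mul_apply]
      rw [Equiv.Perm.ofSubtype_apply_of_not_mem (p := (· ∈ B)) _ hxB,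
        Equiv.Perm.ofSubtype_apply_of_not_mem (p := (· ∈ A)) _ hxA]

lemma rs_union {A B : Finset Φ} (hA : ∀ x, x ∈ A ↔ π x ∈ A)
    (hB : ∀ x, x ∈ B ↔ π x ∈ B) (hd : Disjoint A B) :
    restrictedSign π (A ∪ B) = restrictedSign π A * restrictedSign π B := by
  have hU : ∀ x, x ∈ A ∪ B ↔ π x ∈ A ∪ B := by
    intro x; simp only [mem_union, hA x, hB x]
  rw [rs_eq_ofSubtype π _ hU, rs_eq_ofSubtype π _ hA, rs_eq_ofSubtype π _ hB]
  have := ofSubtype_union π hA hB hd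
  rw [show (Equiv.Perm.ofSubtype (π.subtypePerm (fun x => (hU x).symm))) =
      Equiv.Perm.ofSubtype (π.subtypePerm (fun x => (hA x).symm)) *
      Equiv.Perm.ofSubtype (π.subtypePerm (fun x => (hB x).symm)) from this]
  push_cast [map_mul]
  ring

/-- The orbit of `x` under `π`, as a `Finset`. -/
noncomputable def orb (x : Φ) : Finset Φ := univ.filter (fun y => π.SameCycle x y)

lemma mem_orb {x y : Φ} : y ∈ orb π x ↔ π.SameCycle x y := by
  simp [orb]

lemma orb_invariant (x : Φ) : ∀ y, y ∈ orb π x ↔ π y ∈ orb π x := by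
  intro y
  simp only [mem_orb]
  exact (Equiv.Perm.sameCycle_apply_right).symm

lemma ofSubtype_orb (x : Φ) :
    Equiv.Perm.ofSubtype (π.subtypePerm (fun y => (orb_invariant π x y).symm)) = π.cycleOf x := by
  ext y
  by_cases hy : y ∈ orb π x
  · rw [Equiv.Perm.ofSubtype_apply_of_mem (p := (· ∈ orb π x)) _ hy,
      Equiv.Perm.cycleOf_apply, if_pos (mem_orb π |>.mp hy)]
    rfl
  · rw [Equiv.Perm.ofSubtype_apply_of_not_mem (p := (· ∈ orb π x)) _ hy,
      Equiv.Perm.cycleOf_apply, if_neg (fun h => hy ((mem_orb π).mpr h))]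

lemma rs_orb (x : Φ) :
    (-1 : ℤ) ^ (orb π x).card * restrictedSign π (orb π x) = -1 := by
  rw [rs_eq_ofSubtype π _ (orb_invariant π x), ofSubtype_orb]
  by_cases hx : π x = x
  · have h1 : π.cycleOf x = 1 := (Equiv.Perm.cycleOf_eq_one_iff π).mpr hx
    have horb : orb π x = {x} := by
      ext y
      simp only [mem_orb, mem_singleton]
      constructor
      · rintro ⟨n, rfl⟩
        exact (Equiv.Perm.zpow_apply_eq_self_of_apply_eq_self hx n).symm ▸ rfl
      · rintro rfl; exact Equiv.Perm.SameCycle.refl _ _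
    rw [horb, h1]
    simp
  · have hc : (π.cycleOf x).IsCycle := Equiv.Perm.isCycle_cycleOf π hx
    have hsupp : (π.cycleOf x).support = orb π x := by
      ext y
      rw [Equiv.Perm.mem_support_cycleOf_iff, mem_orb]
      exact ⟨fun h => h.1, fun h => ⟨h, Equiv.Perm.mem_support.mpr hx⟩⟩
    rw [hc.sign, hsupp]
    push_cast
    rw [mul_neg, ← pow_add]
    simp [Even.neg_one_pow ⟨(orb π x).card, rfl⟩]

lemma orb_subset_of_invariant {x : Φ} {E : Finset Φ}
    (hE : ∀ y, y ∈ E ↔ π y ∈ E) (hx : x ∈ E) : orb π x ⊆ E := by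
  intro y hy
  obtain ⟨i, -, rfl⟩ := ((mem_orb π).mp hy).exists_pow_eq'
  clear hy
  induction i with
  | zero => simpa using hx
  | succ n ih => rw [pow_succ', Equiv.Perm.mul_apply]; exact (hE _).mp ih

/-- The orbit is a minimal invariant set: any invariant set meeting it contains it. -/
lemma orb_min {x : Φ} {E : Finset Φ} (hE : ∀ y, y ∈ E ↔ π y ∈ E) :
    Disjoint E (orb π x) ∨ orb π x ⊆ E := by
  by_cases h : Disjoint E (orb π x)
  · exact Or.inl h
  · right
    rw [Finset.not_disjoint_iff] at h
    obtain ⟨y, hyE, hyO⟩ := h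
    intro z hz
    have hyz : π.SameCycle y z := ((mem_orb π).mp hyO).symm.trans ((mem_orb π).mp hz)
    have : z ∈ orb π y := (mem_orb π).mpr hyz
    exact orb_subset_of_invariant π hE hyE this

end Aux

/-- Lemma 2.3. -/
theorem stmt_5 {Φ : Type*} [Fintype Φ] [DecidableEq Φ]
    (π : Equiv.Perm Φ) (𝒞 : Finset (Finset Φ)) (G : Finset Φ)
    (h1 : ∀ E ∈ 𝒞, ∀ x, x ∈ E ↔ π x ∈ E)
    (h2 : ∀ E₁ ∈ 𝒞, ∀ E₂ ∈ 𝒞, E₁ ∪ E₂ ∈ 𝒞 ∧ E₁ \ E₂ ∈ 𝒞)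
    (h3 : G.Nonempty ∧ ∀ x, x ∈ G ↔ π x ∈ G)
    (h4 : ∀ E ⊆ G, (∀ x, x ∈ E ↔ π x ∈ E) → E ∈ 𝒞) :
    ∑ E ∈ 𝒞.filter (fun E => E.Nonempty),
      (-1 : ℤ) ^ (E.card + 1) * restrictedSign π E = 1 := by
  classical
  obtain ⟨⟨x, hxG⟩, hGinv⟩ := h3
  set O : Finset Φ := orb π x with hO
  have hOinv : ∀ y, y ∈ O ↔ π y ∈ O := orb_invariant π x
  have hxO : x ∈ O := (mem_orb π).mpr (Equiv.Perm.SameCycle.refl _ _)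
  have hOsub : O ⊆ G := orb_subset_of_invariant π hGinv hxG
  have hO𝒞 : O ∈ 𝒞 := h4 O hOsub hOinv
  have hOne : O.Nonempty := ⟨x, hxO⟩
  set f : Finset Φ → ℤ := fun E => (-1 : ℤ) ^ (E.card + 1) * restrictedSign π E with hf
  -- key: for invariant A disjoint from O, f (A ∪ O) = - f A
  have key : ∀ A : Finset Φ, (∀ y, y ∈ A ↔ π y ∈ A) → Disjoint A O →
      f (A ∪ O) = - f A := by
    intro A hAinv hd
    have hcard : (A ∪ O).card = A.card + O.card := card_union_of_disjoint hd
    simp only [hf]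
    rw [rs_union π hAinv hOinv hd, hcard]
    have horb := rs_orb π x
    rw [← hO] at horb
    have : (-1 : ℤ) ^ (A.card + O.card + 1) = (-1) ^ (A.card + 1) * (-1) ^ O.card := by
      ring
    rw [this]
    calc (-1 : ℤ) ^ (A.card + 1) * (-1) ^ O.card * (restrictedSign π A * restrictedSign π O)
        = ((-1 : ℤ) ^ (A.card + 1) * restrictedSign π A) *
          ((-1) ^ O.card * restrictedSign π O) := by ring
      _ = - ((-1 : ℤ) ^ (A.card + 1) * restrictedSign π A) := by rw [horb]; ring
  have hOmem : O ∈ 𝒞.filter (fun E => E.Nonempty) := mem_filter.mpr ⟨hO𝒞, hOne⟩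
  rw [← Finset.add_sum_erase _ f hOmem]
  have hfO : f O = 1 := by
    have h := key ∅ (by simp) (by simp)
    simp only [empty_union] at h
    have hempty : f ∅ = -1 := by
      simp only [hf, restrictedSign]
      rw [dif_pos (by simp : ∀ y : Φ, y ∈ (∅ : Finset Φ) ↔ π y ∈ (∅ : Finset Φ))]
      have h1' : π.subtypePerm (by simp : ∀ y : Φ, π y ∈ (∅ : Finset Φ) ↔ y ∈ (∅ : Finset Φ)) = 1 := by
        ext ⟨y, hy⟩
        simp at hy
      rw [h1', map_one]
      simp
    rw [hempty] at h
    simpa using h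
  rw [hfO]
  have hzero : ∑ E ∈ (𝒞.filter (fun E => E.Nonempty)).erase O, f E = 0 := by
    apply Finset.sum_involution (g := fun E _ => E ∆ O)
    · -- f E + f (E ∆ O) = 0
      intro E hE
      rw [mem_erase, mem_filter] at hE
      obtain ⟨hEneO, hE𝒞, hEne⟩ := hE
      have hEinv := h1 E hE𝒞
      rcases orb_min π (x := x) hEinv with hd | hsub
      · -- E disjoint from O : E ∆ O = E ∪ O
        have : E ∆ O = E ∪ O := by
          have hd' := Finset.disjoint_left.mp hd
          ext y
          simp only [Finset.mem_symmDiff, mem_union]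
          constructor
          · rintro (⟨h, -⟩ | ⟨h, -⟩) <;> [exact Or.inl h; exact Or.inr h]
          · rintro (h | h)
            · exact Or.inl ⟨h, hd' h⟩
            · exact Or.inr ⟨h, fun hE => hd' hE h⟩
        rw [this, key E hEinv hd]
        ring
      · -- O ⊆ E : E ∆ O = E \ O
        have hsd : E ∆ O = E \ O := by
          ext y
          simp only [Finset.mem_symmDiff, mem_sdiff]
          constructor
          · rintro (⟨h1', h2'⟩ | ⟨h1', h2'⟩)
            · exact ⟨h1', h2'⟩
            · exact absurd (hsub h1') h2'
          · rintro ⟨h1', h2'⟩; exact Or.inl ⟨h1', h2'⟩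
        have hdiffinv : ∀ y, y ∈ E \ O ↔ π y ∈ E \ O := by
          intro y; simp only [mem_sdiff, hEinv y, hOinv y]
        have hdisj : Disjoint (E \ O) O := Finset.sdiff_disjoint
        have hEeq : (E \ O) ∪ O = E := Finset.sdiff_union_of_subset hsub
        have := key (E \ O) hdiffinv hdisj
        rw [hEeq] at this
        rw [hsd, this]
        ring
    · -- g a ≠ a
      intro E hE _
      intro hcontra
      have : O = ∅ := symmDiff_eq_left.mp hcontra
      exact hOne.ne_empty this
    · -- g maps into the set
      intro E hE
      rw [mem_erase, mem_filter] at hE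
      obtain ⟨hEneO, hE𝒞, hEne⟩ := hE
      have hEinv := h1 E hE𝒞
      rw [mem_erase, mem_filter]
      have hsd𝒞 : E ∆ O ∈ 𝒞 := by
        have : E ∆ O = (E \ O) ∪ (O \ E) := by
          ext y; simp [Finset.mem_symmDiff]
        rw [this]
        exact (h2 _ (h2 E hE𝒞 O hO𝒞).2 _ (h2 O hO𝒞 E hE𝒞).2).1
      refine ⟨?_, hsd𝒞, ?_⟩
      · intro hcontra
        have : E = ∅ := by
          have := congrArg (fun s => s ∆ O) hcontra
          simpa [symmDiff_symmDiff_cancel_right, symmDiff_self] using this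
        exact hEne.ne_empty this
      · rcases orb_min π (x := x) hEinv with hd | hsub
        · have : E ∆ O = E ∪ O := by
            have hd' := Finset.disjoint_left.mp hd
            ext y
            simp only [Finset.mem_symmDiff, mem_union]
            constructor
            · rintro (⟨h, -⟩ | ⟨h, -⟩) <;> [exact Or.inl h; exact Or.inr h]
            · rintro (h | h)
              · exact Or.inl ⟨h, hd' h⟩
              · exact Or.inr ⟨h, fun hE => hd' hE h⟩
          rw [this]
          exact hEne.mono subset_union_left
        · have hsd : E ∆ O = E \ O := by
            ext y
            simp only [Finset.mem_symmDiff, mem_sdiff]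
            constructor
            · rintro (⟨h1', h2'⟩ | ⟨h1', h2'⟩)
              · exact ⟨h1', h2'⟩
              · exact absurd (hsub h1') h2'
            · rintro ⟨h1', h2'⟩; exact Or.inl ⟨h1', h2'⟩
          rw [hsd]
          rw [Finset.sdiff_nonempty]
          intro hsub'
          exact hEneO (le_antisymm hsub' hsub)
    · -- involution
      intro E hE
      simp [symmDiff_symmDiff_cancel_right]
  rw [hzero, add_zero]
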